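/- Let n ≡ 2 (mod 4), let q ≡ 3 (mod 4) be a prime power, and let X ⊆ 𝔽_q^n. Then #{(x, y, z) ∈ X³ : ||x − y|| = ||z − y|| = 0} ≤ |X|³/q + q^{(n−2)/2} |X|². -/

import Mathlib

open Finset

/-- Dot product `x·y = x₁y₁ + ⋯ + xₙyₙ` on `𝔽_q^n`. -/
def dotP {F : Type*} [CommRing F] {n : ℕ} (x y : Fin n → F) : F := ∑ i, x i * y i

/-- The "norm" `‖x‖ = x₁² + ⋯ + xₙ²` on `𝔽_q^n`. -/
def nrm {F : Type*} [CommRing F] {n : ℕ} (x : Fin n → F) : F := ∑ i, x i * x i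

/-- The sphere `S_r = {x ∈ 𝔽_q^n : ‖x‖ = r}`. -/
def sph (F : Type*) [CommRing F] [Fintype F] [DecidableEq F] (n : ℕ) (r : F) :
    Finset (Fin n → F) := Finset.univ.filter fun x => nrm x = r

/-- The dot product set `∏(E) = {x·y : x, y ∈ E}`. -/
def prodSet {F : Type*} [CommRing F] [DecidableEq F] {n : ℕ} (E : Finset (Fin n → F)) :
    Finset F := (E ×ˢ E).image fun p => dotP p.1 p.2

/-- Fourier transform of the indicator function of `X`:
`X̂(m) = q^{-n} ∑_{x ∈ X} χ(-x·m)`. -/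
noncomputable def fourierCoef {F : Type*} [CommRing F] [Fintype F] {n : ℕ}
    (χ : AddChar F ℂ) (X : Finset (Fin n → F)) (m : Fin n → F) : ℂ :=
  ((Fintype.card F : ℂ) ^ n)⁻¹ * ∑ x ∈ X, χ (-(dotP x m))

/-!
Forgetting the constraint on `z`, the triple count is at most `|X| P` with
`P = #{(x, y) ∈ X² : ‖x - y‖ = 0}`. Expanding the indicator of the zero sphere `S₀` in additive
characters gives `q^n P = ∑_m Ŝ₀(m) |X̂(m)|²` (unnormalised transforms). Completing the square
in Gauss sums, `q Ŝ₀(m) = q^n [m = 0] + G^n (q [‖m‖ = 0] - 1)` with `G` the quadratic Gauss sum,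
and for `n ≡ 2 (mod 4)`, `q ≡ 3 (mod 4)` we have `G^n = (G²)^(n/2) = (-q)^(n/2) = -q^(n/2)`.
Hence `q Ŝ₀(m) ≤ q^n [m = 0] + q^(n/2)`, and Plancherel, `∑_m |X̂(m)|² = q^n |X|`, yields
`q P ≤ |X|² + q^(n/2) |X|`.
-/

lemma dotP_eq_dotProduct {R : Type*} [CommRing R] {n : ℕ} (x y : Fin n → R) :
    dotP x y = x ⬝ᵥ y := rfl

namespace AddChar

variable {A M : Type*} [AddCommMonoid A]

lemma map_sum_eq_prod [CommMonoid M] {ι : Type*} (ψ : AddChar A M) (s : Finset ι) (f : ι → A) :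
    ψ (∑ i ∈ s, f i) = ∏ i ∈ s, ψ (f i) := by
  induction s using Finset.cons_induction with
  | empty => simp
  | cons a s ha ih => rw [sum_cons, prod_cons, map_add_eq_mul, ih]

lemma sum_pi_apply_sum [CommSemiring M] [Fintype A] {ι : Type*} [Fintype ι] [DecidableEq ι]
    (ψ : AddChar A M) (f : ι → A → A) :
    ∑ u : ι → A, ψ (∑ i, f i (u i)) = ∏ i, ∑ a, ψ (f i a) := by
  simp_rw [map_sum_eq_prod]
  exact (Fintype.prod_sum fun i a => ψ (f i a)).symm

end AddChar

section Orthogonality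

variable {F R : Type*} [Field F] [Fintype F] [DecidableEq F] [CommRing R] [IsDomain R]
  {ψ : AddChar F R}

lemma sum_addChar_dotP (hψ : ψ.IsPrimitive) {n : ℕ} (w : Fin n → F) :
    ∑ m : Fin n → F, ψ (dotP m w) = if w = 0 then (Fintype.card F : R) ^ n else 0 := by
  simp_rw [dotP]
  rw [ψ.sum_pi_apply_sum fun i a => a * w i]
  simp_rw [AddChar.sum_mulShift _ hψ, Nat.cast_ite, Nat.cast_zero, prod_ite_zero, prod_const,
    card_univ, Fintype.card_fin, funext_iff]
  simp

lemma sum_addChar_div_mul (hψ : ψ.IsPrimitive) {a : F} (ha : a ≠ 0) (b : F) :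
    ∑ s : F, ψ (b / (a * s)) = if b = 0 then (Fintype.card F : R) else 0 := by
  -- `s ↦ (a * s)⁻¹` permutes `F`, because `0⁻¹ = 0`
  have := ((Equiv.mulLeft₀ a ha).trans (Equiv.inv F)).sum_comp fun t => ψ (t * b)
  simp only [Equiv.trans_apply, Equiv.inv_apply, Equiv.mulLeft₀_apply] at this
  simp_rw [div_eq_inv_mul, this, AddChar.sum_mulShift _ hψ, Nat.cast_ite, Nat.cast_zero]

end Orthogonality

lemma four_ne_zero_of_ringChar_ne_two {F : Type*} [Field F] (hF : ringChar F ≠ 2) :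
    (4 : F) ≠ 0 := by
  rw [show (4 : F) = 2 * 2 by norm_num]
  exact mul_ne_zero (Ring.two_ne_zero hF) (Ring.two_ne_zero hF)

section GaussSum

variable {F : Type*} [Field F] [Fintype F] [DecidableEq F] {ψ : AddChar F ℂ}

variable (F) in
noncomputable def complexQuadraticChar : MulChar F ℂ :=
  (quadraticChar F).ringHomComp (Int.castRingHom ℂ)

lemma complexQuadraticChar_isQuadratic : (complexQuadraticChar F).IsQuadratic :=
  (quadraticChar_isQuadratic F).comp _

lemma complexQuadraticChar_mul_self {c : F} (hc : c ≠ 0) :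
    complexQuadraticChar F c * complexQuadraticChar F c = 1 := by
  change ((quadraticChar F c : ℤ) : ℂ) * (quadraticChar F c : ℂ) = 1
  rw [← Int.cast_mul, ← sq, quadraticChar_sq_one hc, Int.cast_one]

lemma sum_addChar_mul_mul_self (hF : ringChar F ≠ 2) (hψ : ψ.IsPrimitive) {c : F} (hc : c ≠ 0) :
    ∑ u : F, ψ (c * (u * u)) =
      complexQuadraticChar F c * gaussSum (complexQuadraticChar F) ψ := by
  set η := complexQuadraticChar F
  have card_sqrts (t : F) : (#{u | u * u = t} : ℂ) = η t + 1 := by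
    have := quadraticChar_card_sqrts hF t
    simp only [Set.toFinset_ofPred, sq] at this
    rw [show η t = ((quadraticChar F t : ℤ) : ℂ) from rfl]
    exact_mod_cast this
  calc ∑ u : F, ψ (c * (u * u))
      = ∑ t : F, (η t + 1) * ψ (c * t) := by
        rw [← sum_fiberwise' univ (fun u => u * u) fun t => ψ (c * t)]
        simp_rw [sum_const, nsmul_eq_mul, card_sqrts]
    _ = gaussSum η (ψ.mulShift c) + ∑ t : F, ψ (t * c) := by
        simp_rw [gaussSum, AddChar.mulShift_apply, add_mul, one_mul, sum_add_distrib, mul_comm c]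
    _ = η c * gaussSum η ψ := by
        rw [AddChar.sum_mulShift _ hψ, if_neg hc, Nat.cast_zero, add_zero,
          ← Units.val_mk0 hc, gaussSum_mulShift_eq, complexQuadraticChar_isQuadratic.inv]

lemma sum_addChar_quadratic (hF : ringChar F ≠ 2) (hψ : ψ.IsPrimitive) {c : F} (hc : c ≠ 0)
    (a : F) :
    ∑ u : F, ψ (c * (u * u) + a * u) =
      complexQuadraticChar F c * gaussSum (complexQuadraticChar F) ψ * ψ (-(a * a) / (4 * c)) := by
  have h2 : (2 : F) ≠ 0 := Ring.two_ne_zero hF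
  have h4 := four_ne_zero_of_ringChar_ne_two hF
  have complete_square (v : F) : c * ((v - a / (2 * c)) * (v - a / (2 * c))) + a * (v - a / (2 * c))
      = c * (v * v) + -(a * a) / (4 * c) := by
    field_simp
    ring
  rw [← (Equiv.subRight (a / (2 * c))).sum_comp]
  simp_rw [Equiv.subRight_apply, complete_square, AddChar.map_add_eq_mul, ← sum_mul,
    sum_addChar_mul_mul_self hF hψ hc]

lemma sum_addChar_nrm_add_dotP (hF : ringChar F ≠ 2) (hψ : ψ.IsPrimitive) {c : F} (hc : c ≠ 0)
    {n : ℕ} (m : Fin n → F) :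
    ∑ u : Fin n → F, ψ (c * nrm u + dotP m u) =
      (complexQuadraticChar F c * gaussSum (complexQuadraticChar F) ψ) ^ n *
        ψ (-nrm m / (4 * c)) := by
  have split (u : Fin n → F) :
      c * nrm u + dotP m u = ∑ i, (c * (u i * u i) + m i * u i) := by
    rw [nrm, dotP, mul_sum, sum_add_distrib]
  simp_rw [split]
  rw [ψ.sum_pi_apply_sum fun i x => c * (x * x) + m i * x]
  simp_rw [sum_addChar_quadratic hF hψ hc, prod_mul_distrib, prod_const, card_univ,
    Fintype.card_fin]
  rw [mul_pow, ← ψ.map_sum_eq_prod, nrm, ← sum_div, ← sum_neg_distrib]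

end GaussSum

section CharSum

variable {F : Type*} [Field F] {n : ℕ}

-- `charSum ψ S m = q ^ n * conj (fourierCoef ψ S m)`
noncomputable def charSum (ψ : AddChar F ℂ) (S : Finset (Fin n → F)) (m : Fin n → F) : ℂ :=
  ∑ u ∈ S, ψ (dotP m u)

lemma normSq_charSum_zero (ψ : AddChar F ℂ) (X : Finset (Fin n → F)) :
    Complex.normSq (charSum ψ X 0) = #X ^ 2 := by
  simp only [charSum, dotP_eq_dotProduct, zero_dotProduct, AddChar.map_zero_eq_one, sum_const,
    nsmul_one, Complex.normSq_natCast]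
  ring

variable [Fintype F] [DecidableEq F] {ψ : AddChar F ℂ}

lemma sum_charSum_mul_addChar_neg (hψ : ψ.IsPrimitive) (S : Finset (Fin n → F))
    (w : Fin n → F) :
    ∑ m, charSum ψ S m * ψ (-dotP m w) = if w ∈ S then (Fintype.card F : ℂ) ^ n else 0 := by
  simp_rw [charSum, sum_mul, ← AddChar.map_add_eq_mul, ← sub_eq_add_neg, dotP_eq_dotProduct,
    ← dotProduct_sub]
  rw [sum_comm]
  simp_rw [← dotP_eq_dotProduct, sum_addChar_dotP hψ, sub_eq_zero, sum_ite_eq']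

lemma card_pow_mul_card_filter_sub_mem (hψ : ψ.IsPrimitive) (S X : Finset (Fin n → F)) :
    (Fintype.card F : ℂ) ^ n * #{p ∈ X ×ˢ X | p.1 - p.2 ∈ S} =
      ∑ m, charSum ψ S m * Complex.normSq (charSum ψ X m) := by
  have normSq_charSum (m : Fin n → F) : (Complex.normSq (charSum ψ X m) : ℂ) =
      ∑ x ∈ X, ∑ y ∈ X, ψ (-dotP m (x - y)) := by
    rw [Complex.normSq_eq_conj_mul_self, charSum, map_sum, sum_mul_sum]
    simp_rw [← AddChar.map_neg_eq_conj, ← AddChar.map_add_eq_mul, dotP_eq_dotProduct,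
      dotProduct_sub, neg_sub, sub_eq_neg_add]
  simp_rw [normSq_charSum, mul_sum]
  rw [sum_comm]
  simp_rw [sum_comm (s := univ), sum_charSum_mul_addChar_neg hψ, card_filter, Nat.cast_sum,
    mul_sum, sum_product, Nat.cast_ite, mul_ite, Nat.cast_one, Nat.cast_zero, mul_one, mul_zero]

lemma sum_normSq_charSum (hψ : ψ.IsPrimitive) (X : Finset (Fin n → F)) :
    ∑ m, Complex.normSq (charSum ψ X m) = (Fintype.card F : ℝ) ^ n * #X := by
  have charSum_zero (m : Fin n → F) : charSum ψ {0} m = 1 := by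
    rw [charSum, sum_singleton, dotP_eq_dotProduct, dotProduct_zero, AddChar.map_zero_eq_one]
  have := card_pow_mul_card_filter_sub_mem hψ {0} X
  simp only [mem_singleton, sub_eq_zero, ← diag_eq_filter, diag_card, charSum_zero,
    one_mul] at this
  exact_mod_cast this.symm

end CharSum

lemma ringChar_ne_two_of_card_mod_four_eq_three {F : Type*} [Field F] [Fintype F]
    (hq : Fintype.card F % 4 = 3) : ringChar F ≠ 2 := fun h => by
  have := FiniteField.even_card_of_char_two h
  omega

section Sphere

variable {F : Type*} [Field F] [Fintype F] [DecidableEq F] {ψ : AddChar F ℂ} {n : ℕ}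

lemma card_mul_charSum_sph_zero (hF : ringChar F ≠ 2) (hψ : ψ.IsPrimitive) (hn : Even n)
    (m : Fin n → F) :
    (Fintype.card F : ℂ) * charSum ψ (sph F n 0) m =
      (if m = 0 then (Fintype.card F : ℂ) ^ n else 0) +
        gaussSum (complexQuadraticChar F) ψ ^ n *
          ((if nrm m = 0 then (Fintype.card F : ℂ) else 0) - 1) := by
  set g := gaussSum (complexQuadraticChar F) ψ
  have indicator (u : Fin n → F) :
      ∑ s : F, ψ (s * nrm u) = if nrm u = 0 then (Fintype.card F : ℂ) else 0 := by
    rw [AddChar.sum_mulShift _ hψ, Nat.cast_ite, Nat.cast_zero]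
  have shifted {s : F} (hs : s ≠ 0) :
      ∑ u, ψ (s * nrm u + dotP m u) = g ^ n * ψ (-nrm m / (4 * s)) := by
    obtain ⟨k, rfl⟩ := hn
    rw [sum_addChar_nrm_add_dotP hF hψ hs, mul_pow, pow_add, ← mul_pow,
      complexQuadraticChar_mul_self hs, one_pow, one_mul]
  calc (Fintype.card F : ℂ) * charSum ψ (sph F n 0) m
      = ∑ s : F, ∑ u, ψ (s * nrm u + dotP m u) := by
        rw [sum_comm]
        simp_rw [charSum, sph, sum_filter, mul_sum, AddChar.map_add_eq_mul, ← sum_mul, indicator,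
          mul_ite, ite_mul, mul_zero, zero_mul]
    _ = ∑ u, ψ (dotP u m) + ∑ s ∈ univ.erase 0, g ^ n * ψ (-nrm m / (4 * s)) := by
        rw [← add_sum_erase _ _ (mem_univ 0),
          sum_congr rfl fun s hs => shifted (ne_of_mem_erase hs)]
        simp_rw [zero_mul, zero_add, dotP_eq_dotProduct, dotProduct_comm]
    _ = _ := by
        rw [sum_addChar_dotP hψ, ← mul_sum, sum_erase_eq_sub (mem_univ 0),
          sum_addChar_div_mul hψ (four_ne_zero_of_ringChar_ne_two hF), mul_zero, div_zero,
          AddChar.map_zero_eq_one]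
        simp only [neg_eq_zero]

lemma gaussSum_pow_eq_neg (hq : Fintype.card F % 4 = 3) (hψ : ψ.IsPrimitive) (hn : n % 4 = 2) :
    gaussSum (complexQuadraticChar F) ψ ^ n = -(Fintype.card F : ℂ) ^ (n / 2) := by
  have hF := ringChar_ne_two_of_card_mod_four_eq_three hq
  have hη : complexQuadraticChar F ≠ 1 :=
    (MulChar.ringHomComp_ne_one_iff Int.cast_injective).mpr (quadraticChar_ne_one hF)
  have hη_neg_one : complexQuadraticChar F (-1) = -1 := by
    change ((quadraticChar F (-1) : ℤ) : ℂ) = -1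
    rw [quadraticChar_neg_one hF, ZMod.χ₄_nat_three_mod_four hq, Int.cast_neg, Int.cast_one]
  have h_odd : Odd (n / 2) := ⟨n / 4, by omega⟩
  rw [show n = 2 * (n / 2) by omega, pow_mul,
    gaussSum_sq hη complexQuadraticChar_isQuadratic hψ, hη_neg_one, neg_one_mul,
    h_odd.neg_pow, Nat.mul_div_cancel_left _ two_pos]

end Sphere

section Counting

variable {F : Type*} [Field F] [Fintype F] [DecidableEq F] {n : ℕ}

lemma card_mul_card_filter_nrm_sub_eq_zero_le (hq : Fintype.card F % 4 = 3) (hn : n % 4 = 2)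
    (X : Finset (Fin n → F)) :
    (Fintype.card F : ℝ) * #{p ∈ X ×ˢ X | nrm (p.1 - p.2) = 0} ≤
      #X ^ 2 + (Fintype.card F : ℝ) ^ (n / 2) * #X := by
  set q : ℝ := (Fintype.card F : ℝ)
  set ψ := AddChar.FiniteField.primitiveChar_to_Complex F
  have hψ : ψ.IsPrimitive := AddChar.FiniteField.primitiveChar_to_Complex_isPrimitive F
  set N : (Fin n → F) → ℝ := fun m => Complex.normSq (charSum ψ X m)
  have hq_cast : ((q : ℝ) : ℂ) = (Fintype.card F : ℂ) := Complex.ofReal_natCast _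
  set r : (Fin n → F) → ℝ := fun m =>
    (if m = 0 then q ^ n else 0) - q ^ (n / 2) * ((if nrm m = 0 then q else 0) - 1)
  have hr (m : Fin n → F) : (Fintype.card F : ℂ) * charSum ψ (sph F n 0) m = (r m : ℂ) := by
    rw [card_mul_charSum_sph_zero (ringChar_ne_two_of_card_mod_four_eq_three hq) hψ
      (Nat.even_iff.2 (by omega)) m, gaussSum_pow_eq_neg hq hψ hn]
    simp only [r, q]
    split_ifs <;> push_cast <;> ring
  have count : q ^ n * (q * #{p ∈ X ×ˢ X | nrm (p.1 - p.2) = 0}) = ∑ m, r m * N m := by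
    have hfilter : {p ∈ X ×ˢ X | p.1 - p.2 ∈ sph F n 0} = {p ∈ X ×ˢ X | nrm (p.1 - p.2) = 0} := by
      simp only [sph, mem_filter, mem_univ, true_and]
    have := card_pow_mul_card_filter_sub_mem hψ (sph F n 0) X
    rw [hfilter] at this
    apply Complex.ofReal_injective
    push_cast
    rw [hq_cast, mul_left_comm, this, mul_sum]
    simp_rw [← mul_assoc, hr]
    rfl
  have hr_le (m : Fin n → F) : r m ≤ (if m = 0 then q ^ n else 0) + q ^ (n / 2) := by
    have hq_one : 1 ≤ q := Nat.one_le_cast.2 Fintype.card_pos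
    have : 0 ≤ q ^ (n / 2) := by positivity
    simp only [r]
    split_ifs <;> nlinarith
  have hq_pow : 0 < q ^ n := by positivity
  refine le_of_mul_le_mul_left ?_ hq_pow
  calc q ^ n * (q * #{p ∈ X ×ˢ X | nrm (p.1 - p.2) = 0})
      = ∑ m, r m * N m := count
    _ ≤ ∑ m, ((if m = 0 then q ^ n else 0) + q ^ (n / 2)) * N m :=
        sum_le_sum fun m _ => mul_le_mul_of_nonneg_right (hr_le m) (Complex.normSq_nonneg _)
    _ = q ^ n * (#X ^ 2 + q ^ (n / 2) * #X) := by
        simp_rw [add_mul, sum_add_distrib, ite_mul, zero_mul, sum_ite_eq', mem_univ, if_true,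
          ← mul_sum, N, sum_normSq_charSum hψ, normSq_charSum_zero]
        ring

end Counting

lemma card_filter_triples_le {α : Type*} [DecidableEq α] (X : Finset α) (r r' : α → α → Prop)
    [DecidableRel r] [DecidableRel r'] :
    #{t ∈ X ×ˢ X ×ˢ X | r t.1 t.2.1 ∧ r' t.2.2 t.2.1} ≤ #X * #{p ∈ X ×ˢ X | r p.1 p.2} := by
  rw [← card_product]
  refine card_le_card_of_injOn (fun t => (t.2.2, (t.1, t.2.1))) ?_ ?_
  · intro t ht
    simp only [coe_filter, mem_coe, mem_product, mem_filter, Set.mem_ofPred_eq] at ht ⊢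
    exact ⟨ht.1.2.2, ⟨ht.1.1, ht.1.2.1⟩, ht.2.1⟩
  · rintro ⟨x, y, z⟩ - ⟨x', y', z'⟩ - h
    simp only [Prod.mk.injEq] at h
    obtain ⟨rfl, rfl, rfl⟩ := h
    rfl

/-- for `n ≡ 2 (mod 4)`, `q ≡ 3 (mod 4)` and `X ⊆ 𝔽_q^n`,
`#{(x,y,z) ∈ X³ : ‖x-y‖ = ‖z-y‖ = 0} ≤ |X|³/q + q^{(n-2)/2} |X|²`. -/
theorem stmt12 (n : ℕ) (hn : n % 4 = 2)
    (F : Type*) [Field F] [Fintype F] [DecidableEq F]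
    (hq : Fintype.card F % 4 = 3)
    (X : Finset (Fin n → F)) :
    ((((X ×ˢ X ×ˢ X).filter fun t =>
        nrm (t.1 - t.2.1) = 0 ∧ nrm (t.2.2 - t.2.1) = 0).card : ℝ)) ≤
      (X.card : ℝ) ^ 3 / (Fintype.card F : ℝ) +
        (Fintype.card F : ℝ) ^ (((n : ℝ) - 2) / 2) * (X.card : ℝ) ^ 2 := by
  set q : ℝ := (Fintype.card F : ℝ)
  have hq_pos : 0 < q := Nat.cast_pos.2 Fintype.card_pos
  have hexp : q ^ (((n : ℝ) - 2) / 2) = q ^ (n / 2) / q := by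
    have hn_even : (n : ℝ) = 2 * ((n / 2 : ℕ) : ℝ) := by exact_mod_cast (by omega : n = 2 * (n / 2))
    rw [hn_even, show (2 * ((n / 2 : ℕ) : ℝ) - 2) / 2 = ((n / 2 : ℕ) : ℝ) - 1 by ring,
      Real.rpow_sub_one hq_pos.ne', Real.rpow_natCast]
  calc (#{t ∈ X ×ˢ X ×ˢ X | nrm (t.1 - t.2.1) = 0 ∧ nrm (t.2.2 - t.2.1) = 0} : ℝ)
      ≤ #X * #{p ∈ X ×ˢ X | nrm (p.1 - p.2) = 0} := by
        exact_mod_cast card_filter_triples_le X (fun x y => nrm (x - y) = 0)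
          fun x y => nrm (x - y) = 0
    _ ≤ #X * ((#X ^ 2 + q ^ (n / 2) * #X) / q) := by
        gcongr
        rw [le_div_iff₀ hq_pos, mul_comm]
        exact card_mul_card_filter_nrm_sub_eq_zero_le hq hn X
    _ = _ := by
        rw [hexp]
        field_simp
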